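/- arXiv:2405.03288 — 7 statements merged into one kernel-verified Lean document; each statement's English description precedes it below -/
import Mathlib

section
/- Let c_1,...,c_N ∈ F_2^n be such that for every i ∈ {2,...,N} there exists j < i with d_H(c_i, c_j) = d. Then the volume of the union of Hamming balls satisfies |∪_{k=1}^N B(c_k, r)| ≤ N·V(n,r) − (N−1)·T(n,d,r), where T(n,d,r) is the volume of the intersection of two Hamming balls of radius r whose centers are at distance d. -/
/-!
Add the balls one at a time. The new ball has `V(n,r)` points and its center is at distance `d`
from an earlier center, so by inclusion–exclusion it adds at most `V(n,r) − T(n,d,r)` new points.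

For the intersection volume, identify a word `z` with the set `D` of coordinates where it differs
from `x`. Over `𝔽₂` the distance from `y` to `z` is then `|D Δ S|`, where `S` is the set where `x`
and `y` differ, and there are `C(d,s)·C(n−d,t)` sets `D` with `|D ∩ S| = s` and `|D \ S| = t`.
-/

open Finset
open scoped symmDiff

/-- Volume of a Hamming ball of radius `r` in `𝔽₂ⁿ`. -/
def V (n r : ℕ) : ℕ := (Finset.range (r + 1)).sum fun k => n.choose k

/-- Hamming ball of radius `r` centered at `x`. -/
def hBall {n : ℕ} (x : Fin n → ZMod 2) (r : ℕ) : Finset (Fin n → ZMod 2) :=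
  Finset.univ.filter fun y => hammingDist x y ≤ r

/-- Volume of the intersection of two Hamming balls of radius `r` whose
centers are at distance `d`. -/
def T (n d r : ℕ) : ℕ :=
  (Finset.range (d + 1)).sum fun s =>
    (Finset.range (n - d + 1)).sum fun t =>
      if s + t ≤ r ∧ t + d - s ≤ r then d.choose s * (n - d).choose t else 0

theorem card_symmDiff_eq {α : Type*} [DecidableEq α] (s t : Finset α) :
    #(s ∆ t) = #(s \ t) + #t - #(s ∩ t) := by
  rw [Finset.symmDiff_def, card_union_of_disjoint disjoint_sdiff_sdiff, card_sdiff (s := s)]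
  have := card_le_card (inter_subset_right (s₁ := s) (s₂ := t))
  omega

section SubsetCount

variable {ι M : Type*} [Fintype ι]

theorem card_filter_card_le (r : ℕ) :
    #{D : Finset ι | #D ≤ r} = ∑ k ∈ range (r + 1), (Fintype.card ι).choose k := by
  rw [card_eq_sum_card_fiberwise (f := card) (t := range (r + 1)) fun D hD => by simp_all]
  refine sum_congr rfl fun k hk => ?_
  rw [← card_univ, ← card_powersetCard, powersetCard_eq_filter, filter_filter]
  congr 1
  ext D
  simp only [mem_range] at hk
  simp only [mem_filter, mem_univ, true_and, mem_powerset, subset_univ]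
  omega

variable [DecidableEq ι] [AddCommMonoid M]

theorem sum_finset_eq_sum_powerset_prod (S : Finset ι) (f : ℕ → ℕ → M) :
    ∑ D : Finset ι, f #(D ∩ S) #(D \ S) = ∑ A ∈ S.powerset, ∑ B ∈ Sᶜ.powerset, f #A #B := by
  rw [← sum_product']
  refine sum_nbij' (fun D => (D ∩ S, D \ S)) (fun p => p.1 ∪ p.2) ?_ ?_ ?_ ?_ fun _ _ => rfl
  · intro D _
    simp [subset_iff]
  · intro _ _
    simp
  · intro D _
    exact sup_inf_sdiff D S
  · rintro ⟨A, B⟩ h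
    simp only [mem_product, mem_powerset, subset_iff, mem_compl] at h
    simp only [Prod.mk.injEq]
    constructor <;> ext i <;> grind

theorem sum_finset_eq_sum_choose_mul_choose (S : Finset ι) (f : ℕ → ℕ → M) :
    ∑ D : Finset ι, f #(D ∩ S) #(D \ S) =
      ∑ s ∈ range (#S + 1), ∑ t ∈ range (#Sᶜ + 1), (#S).choose s • (#Sᶜ).choose t • f s t := by
  simp only [sum_finset_eq_sum_powerset_prod, sum_powerset_apply_card, ← smul_sum]
  rw [sum_powerset_apply_card fun s => ∑ t ∈ range (#Sᶜ + 1), (#Sᶜ).choose t • f s t]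

end SubsetCount

section Binary

variable {ι : Type*} [Fintype ι] [DecidableEq ι]

def hammingDiffEquiv (x : ι → ZMod 2) : (ι → ZMod 2) ≃ Finset ι where
  toFun z := {i | x i ≠ z i}
  invFun D i := if i ∈ D then x i + 1 else x i
  left_inv z := by
    funext i
    simp only [mem_filter, mem_univ, true_and]
    generalize x i = a, z i = b
    revert a b
    decide
  right_inv D := by
    ext i
    by_cases h : i ∈ D <;> simp [h]

theorem card_hammingDiffEquiv (x z : ι → ZMod 2) :
    #(hammingDiffEquiv x z) = hammingDist x z :=
  rfl

theorem hammingDist_eq_card_symmDiff (x y z : ι → ZMod 2) :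
    hammingDist y z = #(hammingDiffEquiv x z ∆ hammingDiffEquiv x y) := by
  rw [hammingDist]
  congr 1
  ext i
  simp only [hammingDiffEquiv, Equiv.coe_fn_mk, mem_filter, mem_univ, true_and, mem_symmDiff]
  generalize x i = a, y i = b, z i = c
  revert a b c
  decide

end Binary

theorem card_hBall {n : ℕ} (x : Fin n → ZMod 2) (r : ℕ) : #(hBall x r) = V n r :=
  calc #(hBall x r) = #{D : Finset (Fin n) | #D ≤ r} :=
        card_equiv (hammingDiffEquiv x) fun z => by simp [hBall, card_hammingDiffEquiv]
    _ = V n r := by rw [card_filter_card_le, Fintype.card_fin, V]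

theorem card_hBall_inter_hBall {n : ℕ} (x y : Fin n → ZMod 2) (r : ℕ) :
    #(hBall x r ∩ hBall y r) = T n (hammingDist x y) r := by
  set S := hammingDiffEquiv x y
  have hS : #S = hammingDist x y := rfl
  have hSc : #Sᶜ = n - hammingDist x y := by rw [card_compl, Fintype.card_fin, hS]
  calc #(hBall x r ∩ hBall y r) = #{D : Finset (Fin n) | #D ≤ r ∧ #(D ∆ S) ≤ r} := by
        refine card_equiv (hammingDiffEquiv x) fun z => ?_
        simp [hBall, card_hammingDiffEquiv, hammingDist_eq_card_symmDiff x y, S]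
    _ = ∑ D : Finset (Fin n),
          if #(D ∩ S) + #(D \ S) ≤ r ∧ #(D \ S) + #S - #(D ∩ S) ≤ r then 1 else 0 := by
        rw [card_filter]
        simp only [card_symmDiff_eq, card_inter_add_card_sdiff]
    _ = T n (hammingDist x y) r := by
        rw [sum_finset_eq_sum_choose_mul_choose S
          fun s t => if s + t ≤ r ∧ t + #S - s ≤ r then 1 else 0, T, hSc, hS]
        refine sum_congr rfl fun s _ => sum_congr rfl fun t _ => ?_
        split_ifs <;> simp

theorem card_biUnion_le_of_chain {α : Type*} [DecidableEq α] {v t : ℕ} :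
    ∀ {N : ℕ} (A : Fin N → Finset α), (∀ k, #(A k) ≤ v) →
      (∀ i : Fin N, 1 ≤ i.val → ∃ j < i, t ≤ #(A i ∩ A j)) →
      (#(univ.biUnion A) : ℤ) ≤ N * v - (N - 1) * t
  | 0, _, _, _ => by simp
  | N + 1, A, hA, hchain => by
    set earlier := univ.biUnion fun k : Fin N => A k.castSucc
    have hsplit : univ.biUnion A = earlier ∪ A (Fin.last N) := by
      ext
      simp [earlier, Fin.exists_fin_succ']
    rcases N.eq_zero_or_pos with rfl | hN
    · simpa [hsplit, earlier] using hA _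
    have hprefix := card_biUnion_le_of_chain (fun k => A k.castSucc) (fun k => hA _) fun i hi => by
      obtain ⟨j, hj, ht⟩ := hchain i.castSucc hi
      have hj' : j ≠ Fin.last N := (hj.trans (Fin.castSucc_lt_last i)).ne
      exact ⟨j.castPred hj', (Fin.castPred_lt_iff hj').2 hj, by simpa using ht⟩
    have hoverlap : t ≤ #(earlier ∩ A (Fin.last N)) := by
      obtain ⟨j, hj, ht⟩ := hchain (Fin.last N) (by simp; omega)
      have hj_earlier : A j ⊆ earlier := by
        simpa using subset_biUnion_of_mem (fun k : Fin N => A k.castSucc) (mem_univ (j.castPred hj.ne))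
      rw [inter_comm]
      exact ht.trans (card_le_card (inter_subset_inter_left hj_earlier))
    have hunion := card_union_add_card_inter earlier (A (Fin.last N))
    have hlast := hA (Fin.last N)
    rw [hsplit]
    push_cast
    zify at hunion hoverlap hlast
    linarith

theorem intersection_bound_general (n N d r : ℕ) (c : Fin N → Fin n → ZMod 2)
    (hchain : ∀ i : Fin N, 1 ≤ i.val → ∃ j : Fin N, j < i ∧ hammingDist (c i) (c j) = d) :
    ((Finset.univ.biUnion fun k => hBall (c k) r).card : ℤ) ≤
      (N : ℤ) * V n r - (N - 1 : ℤ) * T n d r := by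
  refine card_biUnion_le_of_chain _ (fun k => (card_hBall (c k) r).le) fun i hi => ?_
  obtain ⟨j, hj, hdist⟩ := hchain i hi
  exact ⟨j, hj, by rw [card_hBall_inter_hBall, hdist]⟩

/-- Intersection bound: if the codewords form a chain where each one is at
distance exactly `d` from an earlier one, then the union of the balls of
radius `r` has volume at most `N·V(n,r) − (N−1)·T(n,d,r)`. -/
theorem intersection_bound (n N d r : ℕ) (hN : 1 ≤ N) (c : Fin N → Fin n → ZMod 2)
    (hchain : ∀ i : Fin N, 1 ≤ i.val → ∃ j : Fin N, j < i ∧ hammingDist (c i) (c j) = d) :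
    ((Finset.univ.biUnion fun k => hBall (c k) r).card : ℤ) ≤
      (N : ℤ) * V n r - (N - 1 : ℤ) * T n d r :=
  intersection_bound_general n N d r c hchain
end

section
/- Let D ⊆ F_2^n be a connected set (in the Hamming graph) and let B, d_B be positive integers with |D| > (B−1)·V(n, d_B − 1). Then there exists a code C = {c_1,...,c_B} ⊆ D of size B with minimum Hamming distance at least d_B such that for every i ∈ {2,...,B} there exists j < i with d_H(c_i, c_j) = d_B exactly. -/
/-- A subset of `𝔽₂ⁿ` is connected if any two of its points are joined by a
path inside it with steps of Hamming distance `1`. -/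
def IsConnectedSet {n : ℕ} (D : Finset (Fin n → ZMod 2)) : Prop :=
  ∀ x ∈ D, ∀ y ∈ D, ∃ (t : ℕ) (p : ℕ → Fin n → ZMod 2),
    p 0 = x ∧ p t = y ∧ (∀ i ≤ t, p i ∈ D) ∧
    ∀ i < t, hammingDist (p i) (p (i + 1)) = 1

/-!
Greedy selection. If fewer than `B` codewords have been chosen, the Hamming balls of radius
`d_B - 1` around them cannot cover `D`, so some `y ∈ D` is at distance at least `d_B` from all of
them. Walk inside `D` from the first codeword to `y`: every step changes the distance to each
codeword by at most one, so the first point of the walk that is at distance at least `d_B` from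
all codewords is at distance exactly `d_B` from one of them. Adding that point keeps the code
chained.
-/

open Finset

theorem exists_hammingDist_eq_of_walk {ι κ : Type*} [Fintype ι] {β : ι → Type*}
    [∀ i, DecidableEq (β i)] {c : κ → ∀ i, β i} {p : ℕ → ∀ i, β i}
    {d : ℕ} (hstart : ∃ j, hammingDist (c j) (p 0) < d) :
    ∀ {t : ℕ}, (∀ i < t, hammingDist (p i) (p (i + 1)) = 1) →
      (∀ j, d ≤ hammingDist (c j) (p t)) →
      ∃ s ≤ t, (∀ j, d ≤ hammingDist (c j) (p s)) ∧ ∃ j, hammingDist (c j) (p s) = d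
  | 0, _, hfar => by
    obtain ⟨j, hj⟩ := hstart
    exact absurd (hfar j) (not_le.mpr hj)
  | t + 1, hstep, hfar => by
    by_cases hprev : ∀ j, d ≤ hammingDist (c j) (p t)
    · obtain ⟨s, hst, hs⟩ := exists_hammingDist_eq_of_walk hstart
        (fun i hi => hstep i (by omega)) hprev
      exact ⟨s, by omega, hs⟩
    · push Not at hprev
      obtain ⟨j, hj⟩ := hprev
      have htri := hammingDist_triangle (c j) (p t) (p (t + 1))
      rw [hstep t t.lt_succ_self] at htri
      exact ⟨t + 1, le_rfl, hfar, j, le_antisymm (by omega) (hfar j)⟩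

theorem card_filter_hammingDist_le_le_V {n : ℕ} (x : Fin n → ZMod 2) (r : ℕ) :
    (univ.filter fun y => hammingDist x y ≤ r).card ≤ V n r := by
  classical
  have hbinary : ∀ a b c : ZMod 2, (a ≠ c ↔ b ≠ c) → a = b := by decide
  calc (univ.filter fun y => hammingDist x y ≤ r).card
      ≤ ((range (r + 1)).biUnion fun k => powersetCard k (univ : Finset (Fin n))).card := by
        refine card_le_card_of_injOn (fun y => univ.filter fun i => y i ≠ x i) ?_ ?_
        · intro y hy
          simp only [coe_filter, mem_univ, true_and, Set.mem_ofPred_eq] at hy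
          simp only [mem_coe, mem_biUnion, mem_range, mem_powersetCard]
          refine ⟨hammingDist y x, ?_, subset_univ _, rfl⟩
          rw [hammingDist_comm]
          omega
        · intro y _ z _ h
          funext i
          exact hbinary _ _ _ (by simpa using Finset.ext_iff.mp h i)
    _ ≤ ∑ k ∈ range (r + 1), (powersetCard k (univ : Finset (Fin n))).card := card_biUnion_le
    _ = V n r := by simp [V]

theorem exists_mem_forall_lt_hammingDist {n r : ℕ} {κ : Type*} [Fintype κ]
    (c : κ → Fin n → ZMod 2) {D : Finset (Fin n → ZMod 2)}
    (hcard : Fintype.card κ * V n r < D.card) :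
    ∃ y ∈ D, ∀ j, r < hammingDist (c j) y := by
  classical
  by_contra! hcover
  have hsub : D ⊆ univ.biUnion fun j => univ.filter fun y => hammingDist (c j) y ≤ r := by
    intro y hy
    obtain ⟨j, hj⟩ := hcover y hy
    simpa using ⟨j, hj⟩
  have := (card_le_card hsub).trans
    (card_biUnion_le_card_mul _ _ _ fun j _ => card_filter_hammingDist_le_le_V (c j) r)
  rw [card_univ] at this
  omega

structure IsChainedCode {n m : ℕ} (D : Finset (Fin n → ZMod 2)) (d : ℕ)
    (c : Fin m → Fin n → ZMod 2) : Prop where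
  mem : ∀ i, c i ∈ D
  le_hammingDist : ∀ i j, i ≠ j → d ≤ hammingDist (c i) (c j)
  exists_hammingDist_eq : ∀ i : Fin m, 1 ≤ i.val → ∃ j < i, hammingDist (c i) (c j) = d

theorem isChainedCode_elim0 {n : ℕ} (D : Finset (Fin n → ZMod 2)) (d : ℕ) :
    IsChainedCode D d (Fin.elim0 : Fin 0 → Fin n → ZMod 2) :=
  ⟨fun i => i.elim0, fun i => i.elim0, fun i => i.elim0⟩

namespace IsChainedCode

variable {n m d : ℕ} {D : Finset (Fin n → ZMod 2)} {c : Fin m → Fin n → ZMod 2}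

theorem injective (hc : IsChainedCode D d c) (hd : 1 ≤ d) : Function.Injective c := by
  intro i j hij
  by_contra hne
  have := hc.le_hammingDist i j hne
  rw [hij, hammingDist_self] at this
  omega

theorem snoc (hc : IsChainedCode D d c) {y : Fin n → ZMod 2} (hy : y ∈ D)
    (hfar : ∀ j, d ≤ hammingDist (c j) y) (hnear : 0 < m → ∃ j, hammingDist (c j) y = d) :
    IsChainedCode D d (Fin.snoc (α := fun _ => Fin n → ZMod 2) c y) := by
  refine ⟨fun i => ?_, fun i j hij => ?_, fun i hi => ?_⟩
  · induction i using Fin.lastCases <;> simp [hy, hc.mem]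
  · induction i using Fin.lastCases <;> induction j using Fin.lastCases
    · exact absurd rfl hij
    · simpa [hammingDist_comm] using hfar _
    · simpa using hfar _
    · simpa using hc.le_hammingDist _ _ (fun h => hij (congrArg _ h))
  · induction i using Fin.lastCases with
    | last =>
      obtain ⟨j, hj⟩ := hnear (by simpa [Nat.one_le_iff_ne_zero, Nat.pos_iff_ne_zero] using hi)
      exact ⟨j.castSucc, Fin.castSucc_lt_last j, by simpa [hammingDist_comm] using hj⟩
    | cast i =>
      obtain ⟨j, hji, hj⟩ := hc.exists_hammingDist_eq i (by simpa using hi)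
      exact ⟨j.castSucc, Fin.castSucc_lt_castSucc_iff.mpr hji, by simpa using hj⟩

theorem exists_snoc (hc : IsChainedCode D d c) (hD : IsConnectedSet D) (hd : 1 ≤ d)
    (hcard : m * V n (d - 1) < D.card) :
    ∃ y, IsChainedCode D d (Fin.snoc (α := fun _ => Fin n → ZMod 2) c y) := by
  obtain ⟨y, hy, hyfar⟩ := exists_mem_forall_lt_hammingDist c (by simpa using hcard)
  replace hyfar : ∀ j, d ≤ hammingDist (c j) y := fun j => by have := hyfar j; omega
  rcases Nat.eq_zero_or_pos m with rfl | hm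
  · exact ⟨y, hc.snoc hy hyfar (absurd · (lt_irrefl 0))⟩
  obtain ⟨t, p, hp0, hpt, hpD, hstep⟩ := hD _ (hc.mem ⟨0, hm⟩) y hy
  have hstart : ∃ j, hammingDist (c j) (p 0) < d := ⟨⟨0, hm⟩, by rw [hp0, hammingDist_self]; omega⟩
  obtain ⟨s, hst, hsfar, hsnear⟩ :=
    exists_hammingDist_eq_of_walk hstart hstep (hpt ▸ hyfar)
  exact ⟨p s, hc.snoc (hpD s hst) hsfar fun _ => hsnear⟩

end IsChainedCode

theorem IsConnectedSet.exists_isChainedCode {n d : ℕ} {D : Finset (Fin n → ZMod 2)}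
    (hD : IsConnectedSet D) (hd : 1 ≤ d) :
    ∀ m, (m - 1) * V n (d - 1) < D.card → ∃ c : Fin m → Fin n → ZMod 2, IsChainedCode D d c
  | 0, _ => ⟨_, isChainedCode_elim0 D d⟩
  | m + 1, hcard => by
    obtain ⟨c, hc⟩ := hD.exists_isChainedCode hd m
      ((Nat.mul_le_mul_right _ (Nat.sub_le m 1)).trans_lt hcard)
    obtain ⟨y, hy⟩ := hc.exists_snoc hD hd (by simpa using hcard)
    exact ⟨_, hy⟩

theorem connected_set_selection_general (n B dB : ℕ) (hdB : 1 ≤ dB)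
    (D : Finset (Fin n → ZMod 2)) (hD : IsConnectedSet D)
    (hcard : (B - 1) * V n (dB - 1) < D.card) :
    ∃ c : Fin B → Fin n → ZMod 2,
      (∀ i, c i ∈ D) ∧
      Function.Injective c ∧
      (∀ i j, i ≠ j → dB ≤ hammingDist (c i) (c j)) ∧
      ∀ i : Fin B, 1 ≤ i.val → ∃ j : Fin B, j < i ∧ hammingDist (c i) (c j) = dB := by
  obtain ⟨c, hc⟩ := hD.exists_isChainedCode hdB B hcard
  exact ⟨c, hc.mem, hc.injective hdB, hc.le_hammingDist, hc.exists_hammingDist_eq⟩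

/-- On a large enough connected set one can select `B` codewords with minimum
distance `d_B` such that each codeword is at distance exactly `d_B` from an
earlier one. -/
theorem connected_set_selection (n B dB : ℕ) (hB : 1 ≤ B) (hdB : 1 ≤ dB)
    (D : Finset (Fin n → ZMod 2)) (hD : IsConnectedSet D)
    (hcard : (B - 1) * V n (dB - 1) < D.card) :
    ∃ c : Fin B → Fin n → ZMod 2,
      (∀ i, c i ∈ D) ∧
      Function.Injective c ∧
      (∀ i j, i ≠ j → dB ≤ hammingDist (c i) (c j)) ∧
      ∀ i : Fin B, 1 ≤ i.val → ∃ j : Fin B, j < i ∧ hammingDist (c i) (c j) = dB :=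
  connected_set_selection_general n B dB hdB D hD hcard
end

section
/- Given m finite message sets A_1,...,A_m with |A_i| = A_i and distances d_1 ≥ d_2 ≥ ... ≥ d_m ≥ 1, suppose W ⊆ F_2^n satisfies |W| > Σ_{i=1}^m (Π_{j>i} A_j)·(A_i − 1)·V(n, d_i − 1). Then there exists an injective map C : A_1 × ... × A_m → W such that for every i, whenever two message tuples differ in the i-th coordinate, their codewords have Hamming distance at least d_i. -/
/-!
Greedy (Gilbert–Varshamov) construction. Messages are encoded one at a time; when `a` is encoded,
an earlier message `a'` whose first coordinate of disagreement with `a` is `i` only forbids the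
Hamming ball of radius `d i - 1` around its codeword, because `d` is antitone. Grouping the
messages `a' ≠ a` by that first coordinate, there are `(A i - 1) · ∏_{j > i} A j` of them for
each `i`, so the hypothesis on `|W|` says the forbidden balls never cover `W`.
-/

open Finset

lemma ZMod.two_eq_of_ne_iff_ne {a b c : ZMod 2} (h : a ≠ b ↔ a ≠ c) : b = c := by
  revert a b c; decide

lemma card_hammingBall_le (n r : ℕ) (x : Fin n → ZMod 2) :
    #{y | hammingDist x y ≤ r} ≤ V n r := by
  have hmaps : ∀ y ∈ ({y | hammingDist x y ≤ r} : Finset (Fin n → ZMod 2)),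
      ({i | x i ≠ y i} : Finset (Fin n)) ∈ (range (r + 1)).biUnion (powersetCard · univ) := by
    intro y hy
    simp only [mem_filter, mem_univ, true_and] at hy
    exact mem_biUnion.mpr ⟨hammingDist x y, mem_range.mpr (Nat.lt_succ_of_le hy),
      mem_powersetCard.mpr ⟨subset_univ _, rfl⟩⟩
  have hinj : Function.Injective fun y : Fin n → ZMod 2 => ({i | x i ≠ y i} : Finset (Fin n)) := by
    intro y y' h
    funext i
    exact ZMod.two_eq_of_ne_iff_ne (by simpa using Finset.ext_iff.mp h i)
  calc #{y | hammingDist x y ≤ r}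
      ≤ #((range (r + 1)).biUnion (powersetCard · univ)) := card_le_card_of_injOn _ hmaps hinj.injOn
    _ ≤ V n r := card_biUnion_le.trans_eq (by simp [V, card_powersetCard])

section Greedy

variable {α β : Type*} (δ : β → β → ℕ) (W : Finset β) (B : ℕ → ℕ)

lemma exists_mem_forall_le_of_sum_lt (hball : ∀ x r, #{y ∈ W | δ x y < r} ≤ B r)
    (s : Finset α) (c : α → β) (r : α → ℕ) (hs : ∑ a ∈ s, B (r a) < #W) :
    ∃ x ∈ W, ∀ a ∈ s, r a ≤ δ (c a) x := by
  classical
  have hcard : #(s.biUnion fun a => {y ∈ W | δ (c a) y < r a}) < #W :=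
    (card_biUnion_le.trans (sum_le_sum fun a _ => hball _ _)).trans_lt hs
  obtain ⟨x, hxW, hx⟩ := exists_mem_notMem_of_card_lt_card hcard
  exact ⟨x, hxW, fun a ha => not_lt.mp fun hlt =>
    hx (mem_biUnion.mpr ⟨a, ha, mem_filter.mpr ⟨hxW, hlt⟩⟩)⟩

theorem exists_code_of_sum_lt [Fintype α] [DecidableEq α] [Nonempty β]
    (hδ : ∀ x y, δ x y = δ y x) (req : α → α → ℕ) (hreq : ∀ a a', req a a' = req a' a)
    (hball : ∀ x r, #{y ∈ W | δ x y < r} ≤ B r)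
    (hsum : ∀ a, ∑ a' ∈ univ.erase a, B (req a a') < #W) :
    ∃ C : α → β, (∀ a, C a ∈ W) ∧ ∀ a a', a ≠ a' → req a a' ≤ δ (C a) (C a') := by
  suffices h : ∀ s : Finset α, ∃ C : α → β, (∀ a ∈ s, C a ∈ W) ∧
      ∀ a ∈ s, ∀ a' ∈ s, a ≠ a' → req a a' ≤ δ (C a) (C a') by
    obtain ⟨C, hCW, hCd⟩ := h univ
    exact ⟨C, fun a => hCW a (mem_univ a), fun a a' => hCd a (mem_univ a) a' (mem_univ a')⟩
  intro s
  induction s using Finset.induction_on with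
  | empty => exact ⟨fun _ => Classical.arbitrary β, by simp, by simp⟩
  | @insert a s ha ih =>
    obtain ⟨C, hCW, hCd⟩ := ih
    have hs : s ⊆ univ.erase a := fun a' ha' => mem_erase.mpr ⟨ne_of_mem_of_not_mem ha' ha, mem_univ a'⟩
    obtain ⟨x, hxW, hx⟩ := exists_mem_forall_le_of_sum_lt δ W B hball s C (req a)
      ((sum_le_sum_of_subset hs).trans_lt (hsum a))
    have hC' : ∀ a' ∈ s, Function.update C a x a' = C a' := fun a' ha' =>
      Function.update_of_ne (ne_of_mem_of_not_mem ha' ha) _ _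
    refine ⟨Function.update C a x, fun b hb => ?_, fun b hb b' hb' hne => ?_⟩
    · rcases mem_insert.mp hb with rfl | hbs
      · simpa using hxW
      · simpa [hC' b hbs] using hCW b hbs
    rcases mem_insert.mp hb with rfl | hbs <;> rcases mem_insert.mp hb' with rfl | hbs'
    · exact absurd rfl hne
    · simpa [hC' b' hbs', hδ x] using hx b' hbs'
    · simpa [hC' b hbs, hreq b] using hx b hbs
    · simpa [hC' b hbs, hC' b' hbs'] using hCd b hbs b' hbs' hne

end Greedy

section FirstDifference

variable {ι : Type*} [Fintype ι] {β : ι → Type*} [∀ i, DecidableEq (β i)]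

def requiredDist (d : ι → ℕ) (a a' : ∀ i, β i) : ℕ := ({i | a i ≠ a' i} : Finset ι).sup d

lemma requiredDist_comm (d : ι → ℕ) (a a' : ∀ i, β i) :
    requiredDist d a a' = requiredDist d a' a := by
  simp only [requiredDist, ne_comm]

lemma requiredDist_le_iff {d : ι → ℕ} {a a' : ∀ i, β i} {k : ℕ} :
    requiredDist d a a' ≤ k ↔ ∀ i, a i ≠ a' i → d i ≤ k := by
  simp [requiredDist]

variable [LinearOrder ι] [∀ i, Fintype (β i)]

def firstDiffSet (a : ∀ i, β i) (i : ι) : Finset (∀ i, β i) :=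
  {a' | a' i ≠ a i ∧ ∀ j < i, a' j = a j}

lemma requiredDist_eq_of_mem_firstDiffSet {d : ι → ℕ} (hd : Antitone d) {a a' : ∀ i, β i} {i : ι}
    (h : a' ∈ firstDiffSet a i) : requiredDist d a a' = d i := by
  simp only [firstDiffSet, mem_filter, mem_univ, true_and] at h
  refine le_antisymm (requiredDist_le_iff.mpr fun j hj => hd ?_) ?_
  · exact not_lt.mp fun hji => hj (h.2 j hji).symm
  · exact le_sup (f := d) (by simpa [eq_comm] using h.1)

lemma exists_mem_firstDiffSet {a a' : ∀ i, β i} (h : a' ≠ a) : ∃ i, a' ∈ firstDiffSet a i := by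
  have hne : ({i | a' i ≠ a i} : Finset ι).Nonempty := by
    simpa [Finset.Nonempty] using Function.ne_iff.mp h
  refine ⟨_, mem_filter.mpr ⟨mem_univ _, (mem_filter.mp (min'_mem _ hne)).2, fun j hj => ?_⟩⟩
  by_contra hj'
  exact (min'_le _ j (by simpa using hj')).not_gt hj

lemma pairwiseDisjoint_firstDiffSet (a : ∀ i, β i) :
    (Set.univ : Set ι).PairwiseDisjoint (firstDiffSet a) := by
  intro i _ j _ hij
  refine disjoint_left.mpr fun a' hi hj => ?_
  simp only [firstDiffSet, mem_filter, mem_univ, true_and] at hi hj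
  rcases hij.lt_or_gt with h | h
  · exact hi.1 (hj.2 i h)
  · exact hj.1 (hi.2 j h)

lemma card_firstDiffSet_le (a : ∀ i, β i) (i : ι) :
    #(firstDiffSet a i) ≤ (Fintype.card (β i) - 1) * ∏ j ∈ {j | i < j}, Fintype.card (β j) := by
  have hmaps : ∀ a' ∈ firstDiffSet a i,
      (a' i, fun j : {j // i < j} => a' j) ∈ (univ.erase (a i)) ×ˢ univ := by
    intro a' ha'
    simp only [firstDiffSet, mem_filter, mem_univ, true_and] at ha'
    simpa using ha'.1
  have hinj : Set.InjOn (fun a' : ∀ i, β i => (a' i, fun j : {j // i < j} => a' j))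
      (firstDiffSet a i) := by
    intro a₁ h₁ a₂ h₂ he
    simp only [firstDiffSet, coe_filter, mem_univ, true_and, Set.mem_ofPred_eq] at h₁ h₂
    simp only [Prod.mk.injEq, funext_iff, Subtype.forall] at he
    funext j
    rcases lt_trichotomy j i with h | rfl | h
    · rw [h₁.2 j h, h₂.2 j h]
    · exact he.1
    · exact he.2 j h
  refine (card_le_card_of_injOn _ hmaps hinj).trans_eq ?_
  rw [card_product, card_erase_of_mem (mem_univ _), card_univ, card_univ, Fintype.card_pi,
    prod_subtype {j | i < j} (p := (i < ·)) (by simp)]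

lemma sum_erase_requiredDist_le {d : ι → ℕ} (hd : Antitone d) (a : ∀ i, β i) (f : ℕ → ℕ) :
    ∑ a' ∈ univ.erase a, f (requiredDist d a a') ≤
      ∑ i, (∏ j ∈ {j | i < j}, Fintype.card (β j)) * (Fintype.card (β i) - 1) * f (d i) := by
  have hcover : univ.erase a ⊆ univ.biUnion (firstDiffSet a) := fun a' ha' => by
    simpa using exists_mem_firstDiffSet (mem_erase.mp ha').1
  calc ∑ a' ∈ univ.erase a, f (requiredDist d a a')
      ≤ ∑ a' ∈ univ.biUnion (firstDiffSet a), f (requiredDist d a a') := sum_le_sum_of_subset hcover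
    _ = ∑ i, #(firstDiffSet a i) * f (d i) := by
      rw [sum_biUnion (by simpa using pairwiseDisjoint_firstDiffSet a)]
      refine sum_congr rfl fun i _ => ?_
      rw [sum_congr rfl fun a' h => congrArg f (requiredDist_eq_of_mem_firstDiffSet hd h),
        sum_const, smul_eq_mul]
    _ ≤ _ := sum_le_sum fun i _ => by
      rw [mul_comm (∏ j ∈ _, _)]
      gcongr
      exact card_firstDiffSet_le a i

end FirstDifference

/-- GV bound for multi-level UEP codes: if `W ⊆ 𝔽₂ⁿ` is larger than
`Σ_i (Π_{j>i} A_j)·(A_i − 1)·V(n, d_i − 1)`, there is a UEP code inside `W`. -/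
theorem uep_gv_bound (n m : ℕ) (A : Fin m → ℕ) (d : Fin m → ℕ)
    (hd1 : ∀ i, 1 ≤ d i) (hmono : ∀ i j : Fin m, i ≤ j → d j ≤ d i)
    (W : Finset (Fin n → ZMod 2))
    (hW : (Finset.univ.sum fun i : Fin m =>
        ((Finset.univ.filter fun j : Fin m => i < j).prod A) * (A i - 1) * V n (d i - 1))
      < W.card) :
    ∃ C : (∀ i : Fin m, Fin (A i)) → (Fin n → ZMod 2),
      Function.Injective C ∧
      (∀ a, C a ∈ W) ∧
      ∀ (a a' : ∀ i : Fin m, Fin (A i)) (i : Fin m),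
        a i ≠ a' i → d i ≤ hammingDist (C a) (C a') := by
  have hball : ∀ (x : Fin n → ZMod 2) r, #{y ∈ W | hammingDist x y < r} ≤ V n (r - 1) :=
    fun x r => (card_le_card fun y hy => mem_filter.mpr ⟨mem_univ y, by
      have := (mem_filter.mp hy).2; omega⟩).trans (card_hammingBall_le n _ x)
  have hsum : ∀ a : ∀ i, Fin (A i),
      ∑ a' ∈ univ.erase a, V n (requiredDist d a a' - 1) < #W := fun a => by
    refine (sum_erase_requiredDist_le hmono a fun r => V n (r - 1)).trans_lt ?_
    simpa only [Fintype.card_fin] using hW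
  obtain ⟨C, hCW, hCd⟩ := exists_code_of_sum_lt hammingDist W (fun r => V n (r - 1))
    hammingDist_comm (requiredDist d) (requiredDist_comm d) hball hsum
  have hsep : ∀ a a' i, a i ≠ a' i → d i ≤ hammingDist (C a) (C a') := fun a a' i hi =>
    requiredDist_le_iff.mp (hCd a a' (ne_of_apply_ne (· i) hi)) i hi
  refine ⟨C, fun a a' h => not_not.mp fun hne => ?_, hCW, hsep⟩
  obtain ⟨i, hi⟩ := Function.ne_iff.mp hne
  exact absurd ((hd1 i).trans (hsep a a' i hi)) (by simp [h])
end

section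
/- Let n, A, B, d_A, d_B be positive integers with d_A ≥ d_B and 2^n > B·(A−1)·V(n, d_A − 1) + (B−1)·V(n, d_B − 1). Then there exists an injective map C : {1,...,A} × {1,...,B} → F_2^n such that any two codewords whose first message indices differ are at Hamming distance at least d_A, and any two distinct codewords are at Hamming distance at least d_B. -/
open Finset

lemma ZMod.add_one_eq_of_ne : ∀ {a b : ZMod 2}, a ≠ b → a + 1 = b := by decide

lemma exists_forall_lt_hammingDist {ι : Type*} {n : ℕ} (c : ι → Fin n → ZMod 2)
    (r : ι → ℕ) (S : Finset ι) (hvol : ∑ j ∈ S, V n (r j) < 2 ^ n) :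
    ∃ x, ∀ j ∈ S, r j < hammingDist (c j) x := by
  classical
  have hcard : #(S.biUnion fun j => {y | hammingDist (c j) y ≤ r j}) <
      #(univ : Finset (Fin n → ZMod 2)) :=
    calc _ ≤ ∑ j ∈ S, V n (r j) :=
          card_biUnion_le.trans (sum_le_sum fun j _ => card_hammingBall_le n (r j) (c j))
      _ < _ := by simpa using hvol
  obtain ⟨x, -, hx⟩ := exists_mem_notMem_of_card_lt_card hcard
  refine ⟨x, fun j hj => ?_⟩
  by_contra! hle
  exact hx (mem_biUnion.mpr ⟨j, hj, (mem_filter_univ x).mpr hle⟩)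

theorem exists_code_hammingDist_gt_of_sum_V_lt {ι : Type*} [Fintype ι] [DecidableEq ι]
    {n : ℕ} (r : ι → ι → ℕ) (hr : ∀ i j, r i j = r j i)
    (hvol : ∀ i, ∑ j ∈ univ.erase i, V n (r i j) < 2 ^ n) :
    ∃ C : ι → Fin n → ZMod 2, ∀ i j, i ≠ j → r i j < hammingDist (C i) (C j) := by
  suffices ∀ S : Finset ι, ∃ C : ι → Fin n → ZMod 2,
      ∀ i ∈ S, ∀ j ∈ S, i ≠ j → r i j < hammingDist (C i) (C j) by
    obtain ⟨C, hC⟩ := this univ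
    exact ⟨C, fun i j => hC i (mem_univ i) j (mem_univ j)⟩
  intro S
  induction S using Finset.induction_on with
  | empty => exact ⟨0, by simp⟩
  | @insert i S hi ih =>
    obtain ⟨C, hC⟩ := ih
    have hS : S ⊆ univ.erase i := fun j hj =>
      mem_erase.mpr ⟨ne_of_mem_of_not_mem hj hi, mem_univ j⟩
    obtain ⟨x, hx⟩ := exists_forall_lt_hammingDist C (r i) S
      ((sum_le_sum_of_subset hS).trans_lt (hvol i))
    refine ⟨Function.update C i x, ?_⟩
    intro j hj k hk hjk
    rcases mem_insert.mp hj with rfl | hjS <;> rcases mem_insert.mp hk with rfl | hkS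
    · exact absurd rfl hjk
    · rw [Function.update_self, Function.update_of_ne (ne_of_mem_of_not_mem hkS hi),
        hammingDist_comm]
      exact hx k hkS
    · rw [Function.update_self, Function.update_of_ne (ne_of_mem_of_not_mem hjS hi), hr]
      exact hx j hjS
    · rw [Function.update_of_ne (ne_of_mem_of_not_mem hjS hi),
        Function.update_of_ne (ne_of_mem_of_not_mem hkS hi)]
      exact hC j hjS k hkS hjk

lemma sum_erase_ite_fst_eq {α β : Type*} [Fintype α] [Fintype β] [DecidableEq α]
    [DecidableEq β]     (p : α × β) (x y : ℕ) :
    ∑ q ∈ univ.erase p, (if p.1 = q.1 then x else y) =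
      Fintype.card β * (Fintype.card α - 1) * y + (Fintype.card β - 1) * x := by
  have hfst : ∑ a, (if p.1 = a then x else y) = x + (Fintype.card α - 1) * y := by
    rw [← add_sum_erase _ _ (mem_univ p.1), if_pos rfl,
      sum_congr rfl fun a ha => if_neg (ne_of_mem_erase ha).symm]
    simp
  have htotal : ∑ q : α × β, (if p.1 = q.1 then x else y) =
      Fintype.card β * (x + (Fintype.card α - 1) * y) := by
    rw [Fintype.sum_prod_type' (fun a (_ : β) => if p.1 = a then x else y)]
    simp only [sum_const, card_univ, smul_eq_mul, ← mul_sum, hfst]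
  obtain ⟨k, hk⟩ := Nat.exists_eq_add_of_le' (Fintype.card_pos_iff.mpr ⟨p.2⟩)
  rw [← add_sum_erase _ _ (mem_univ p), if_pos rfl, hk] at htotal
  rw [hk, Nat.add_sub_cancel]
  linarith

theorem uep_two_level_gv_general (n A B dA dB : ℕ)
    (hd : dB ≤ dA)
    (hsize : B * (A - 1) * V n (dA - 1) + (B - 1) * V n (dB - 1) < 2 ^ n) :
    ∃ C : Fin A × Fin B → Fin n → ZMod 2,
      Function.Injective C ∧
      (∀ p q : Fin A × Fin B, p.1 ≠ q.1 → dA ≤ hammingDist (C p) (C q)) ∧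
      (∀ p q : Fin A × Fin B, p ≠ q → dB ≤ hammingDist (C p) (C q)) := by
  let r (p q : Fin A × Fin B) : ℕ := if p.1 = q.1 then dB - 1 else dA - 1
  have hr_symm : ∀ p q, r p q = r q p := fun p q => by simp only [r, eq_comm]
  have hvol : ∀ p, ∑ q ∈ univ.erase p, V n (r p q) < 2 ^ n := fun p => by
    simpa only [r, apply_ite, sum_erase_ite_fst_eq, Fintype.card_fin] using hsize
  obtain ⟨C, hC⟩ := exists_code_hammingDist_gt_of_sum_V_lt r hr_symm hvol
  have hfar : ∀ p q, p ≠ q → dB ≤ hammingDist (C p) (C q) := fun p q hpq => by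
    have := hC p q hpq
    simp only [r] at this
    split_ifs at this <;> omega
  refine ⟨C, fun p q hCpq => ?_, fun p q hpq => ?_, hfar⟩
  · by_contra hpq
    have := hC p q hpq
    rw [hCpq, hammingDist_self] at this
    exact Nat.not_lt_zero _ this
  · have := hC p q fun h => hpq (congrArg Prod.fst h)
    simp only [r, if_neg hpq] at this
    omega

/-- GV bound for two-level UEP codes. -/
theorem uep_two_level_gv (n A B dA dB : ℕ)
    (hA : 1 ≤ A) (hB : 1 ≤ B) (hdB : 1 ≤ dB) (hd : dB ≤ dA)
    (hsize : B * (A - 1) * V n (dA - 1) + (B - 1) * V n (dB - 1) < 2 ^ n) :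
    ∃ C : Fin A × Fin B → Fin n → ZMod 2,
      Function.Injective C ∧
      (∀ p q : Fin A × Fin B, p.1 ≠ q.1 → dA ≤ hammingDist (C p) (C q)) ∧
      (∀ p q : Fin A × Fin B, p ≠ q → dB ≤ hammingDist (C p) (C q)) :=
  uep_two_level_gv_general n A B dA dB hd hsize
end

section
/- Let n, k_A, k_B, d_A, d_B be positive integers with d_A > d_B, and suppose 2^n > 2^{k_B}·(2^{k_A}−1)·V(n,d_A) + (2^{k_B}−1)·V(n,d_B). Then there exists a matrix G_0 ∈ F_2^{(k_A+k_B)×n} such that for all nonzero u ∈ F_2^{k_A+k_B}: if the first k_A coordinates of u are not all zero then the Hamming weight of u·G_0 is at least d_A + 1, and otherwise (so the last k_B coordinates are nonzero) the Hamming weight of u·G_0 is at least d_B + 1. -/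
/-!
For a nonzero message `u`, the map `G ↦ u ᵥ* G` is a surjective linear map, so as `G` runs over
all generator matrices, `u ᵥ* G` hits every word of `𝔽₂ⁿ` equally often: the fraction of `G` for
which `u` is encoded inside the Hamming ball of radius `d` is `V n d / 2ⁿ`. A union bound over the
`2^k_B (2^k_A - 1)` messages that must reach weight `d_A + 1` and the `2^k_B - 1` that must reach
`d_B + 1` shows that the hypothesis leaves a matrix that is bad for no message.
-/

open Finset Matrix

namespace AddMonoidHom

variable {A B : Type*} [AddGroup A] [Fintype A] [AddGroup B] [Fintype B] [DecidableEq B]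

theorem card_preimage_mul_card_of_surjective (f : A →+ B) (hf : Function.Surjective f)
    (s : Finset B) : #{a | f a ∈ s} * Fintype.card B = #s * Fintype.card A := by
  have hpre : ∀ t : Finset B, #{a | f a ∈ t} = #t * #{a | f a = 0} := fun t => by
    rw [card_eq_sum_card_fiberwise (t := t) (f := f) (fun a ha => by simpa using ha),
      ← smul_eq_mul, ← sum_const]
    refine sum_congr rfl fun b hb => ?_
    rw [filter_filter, ← card_fiber_eq_of_mem_range f (hf b) (hf 0)]
    congr 1; ext a; simp only [mem_filter, mem_univ, true_and, and_iff_right_iff_imp]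
    rintro rfl; exact hb
  have hA := hpre univ
  simp only [mem_univ, filter_true, card_univ] at hA
  rw [hpre, hA]; ring

end AddMonoidHom

namespace Matrix

variable {K m ι : Type*} [DivisionRing K] [Fintype m] [DecidableEq m]

theorem vecMul_left_surjective {u : m → K} (hu : u ≠ 0) :
    Function.Surjective (fun G : Matrix m ι K => u ᵥ* G) := by
  obtain ⟨i, hi⟩ : ∃ i, u i ≠ 0 := Function.ne_iff.mp hu
  intro v
  refine ⟨vecMulVec (Pi.single i (u i)⁻¹) v, ?_⟩
  simp [vecMul_vecMulVec, dotProduct_single, mul_inv_cancel₀ hi]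

variable [Fintype K] [DecidableEq K] [Fintype ι] [DecidableEq ι]

theorem card_filter_vecMul_mem_mul_card {u : m → K} (hu : u ≠ 0) (s : Finset (ι → K)) :
    #{G : Matrix m ι K | u ᵥ* G ∈ s} * Fintype.card (ι → K) =
      #s * Fintype.card (Matrix m ι K) :=
  (AddMonoidHom.mk' (u ᵥ* ·) (vecMul_add · · u)).card_preimage_mul_card_of_surjective
    (vecMul_left_surjective hu) s

theorem exists_forall_lt_hammingNorm_vecMul (r : (m → K) → ℕ)
    (h : ∑ u with u ≠ 0, #{v : ι → K | hammingNorm v ≤ r u} < Fintype.card (ι → K)) :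
    ∃ G : Matrix m ι K, ∀ u ≠ 0, r u < hammingNorm (u ᵥ* G) := by
  set bad : (m → K) → Finset (Matrix m ι K) := fun u => {G | hammingNorm (u ᵥ* G) ≤ r u}
  have hbad : ∀ u ≠ 0, #(bad u) * Fintype.card (ι → K) =
      #{v : ι → K | hammingNorm v ≤ r u} * Fintype.card (Matrix m ι K) := fun u hu => by
    simpa using card_filter_vecMul_mem_mul_card hu {v : ι → K | hammingNorm v ≤ r u}
  have hcard : #((univ.filter (· ≠ 0)).biUnion bad) < #(univ : Finset (Matrix m ι K)) := by
    refine lt_of_mul_lt_mul_right ?_ (Nat.zero_le (Fintype.card (ι → K)))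
    calc #((univ.filter (· ≠ 0)).biUnion bad) * Fintype.card (ι → K)
        ≤ ∑ u with u ≠ 0, #(bad u) * Fintype.card (ι → K) := by
          rw [← sum_mul]; exact Nat.mul_le_mul_right _ card_biUnion_le
      _ = (∑ u with u ≠ 0, #{v : ι → K | hammingNorm v ≤ r u}) *
            Fintype.card (Matrix m ι K) := by
          rw [sum_mul]; exact sum_congr rfl fun u hu => hbad u (mem_filter.1 hu).2
      _ < Fintype.card (ι → K) * Fintype.card (Matrix m ι K) := by gcongr
      _ = #univ * Fintype.card (ι → K) := mul_comm _ _
  obtain ⟨G, -, hG⟩ := exists_mem_notMem_of_card_lt_card hcard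
  refine ⟨G, fun u hu => not_le.1 fun hle => hG (mem_biUnion.2 ⟨u, ?_, ?_⟩)⟩ <;> simp [bad, hu, hle]

end Matrix

theorem card_finset_card_le (ι : Type*) [Fintype ι] (d : ℕ) :
    #{s : Finset ι | #s ≤ d} = V (Fintype.card ι) d := by
  rw [card_eq_sum_card_fiberwise (f := card) (t := range (d + 1))
    (fun s hs => by simpa [Nat.lt_succ_iff] using hs)]
  refine sum_congr rfl fun k hk => ?_
  have hkd : k ≤ d := Nat.lt_succ_iff.1 (mem_range.1 hk)
  rw [← card_univ, ← card_powersetCard, ← univ_filter_card_eq, filter_filter]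
  congr 1; ext s; simp only [mem_filter, mem_univ, true_and, and_iff_right_iff_imp]
  omega

theorem card_hammingNorm_le_zmodTwo {ι : Type*} [Fintype ι] [DecidableEq ι] (d : ℕ) :
    #{v : ι → ZMod 2 | hammingNorm v ≤ d} = V (Fintype.card ι) d := by
  rw [← card_finset_card_le]
  refine card_nbij' (fun v => ({i | v i ≠ 0} : Finset ι)) (fun s i => if i ∈ s then 1 else 0)
    ?_ ?_ ?_ ?_
  · intro v hv; simpa [hammingNorm] using hv
  · intro s hs; simpa [hammingNorm] using hs
  · intro v _
    funext i
    simp only [mem_filter, mem_univ, true_and]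
    generalize v i = a
    revert a
    decide -- every nonzero element of `ZMod 2` is `1`
  · intro s _; ext i; simp

section Messages

variable {α : Type*} [Zero α]

theorem exists_lt_ne_zero_iff_castAdd_ne_zero {k l : ℕ} (u : Fin (k + l) → α) :
    (∃ i : Fin (k + l), i.val < k ∧ u i ≠ 0) ↔ (fun i => u (Fin.castAdd l i)) ≠ 0 := by
  simp only [ne_eq, funext_iff, Pi.zero_apply, not_forall]
  exact ⟨fun ⟨i, hi, hu⟩ => ⟨⟨i, hi⟩, hu⟩, fun ⟨i, hu⟩ => ⟨_, i.isLt, hu⟩⟩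

variable [Fintype α] [DecidableEq α]

theorem card_filter_ne_zero_castAdd_ne_zero (k l : ℕ) :
    #{u : Fin (k + l) → α | u ≠ 0 ∧ (fun i => u (Fin.castAdd l i)) ≠ 0} =
      Fintype.card α ^ l * (Fintype.card α ^ k - 1) := by
  rw [card_equiv (t := ({a | a ≠ 0} : Finset _) ×ˢ univ) (Fin.appendEquiv k l).symm (fun u => ?_)]
  · simp [filter_ne', mul_comm]
  · simp only [mem_filter, mem_univ, true_and, mem_product, Fin.appendEquiv_symm_apply, ne_eq,
      funext_iff, Fin.forall_fin_add, Pi.zero_apply]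
    tauto

theorem card_filter_ne_zero_castAdd_eq_zero (k l : ℕ) :
    #{u : Fin (k + l) → α | u ≠ 0 ∧ (fun i => u (Fin.castAdd l i)) = 0} =
      Fintype.card α ^ l - 1 := by
  rw [card_equiv (t := {0} ×ˢ ({b | b ≠ 0} : Finset _)) (Fin.appendEquiv k l).symm (fun u => ?_)]
  · simp [filter_ne']
  · simp only [mem_filter, mem_univ, true_and, mem_product, mem_singleton,
      Fin.appendEquiv_symm_apply, ne_eq, funext_iff, Fin.forall_fin_add, Pi.zero_apply]
    tauto

theorem sum_ne_zero_ite_exists_lt (k l a b : ℕ) :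
    ∑ u : Fin (k + l) → α with u ≠ 0, (if ∃ i : Fin (k + l), i.val < k ∧ u i ≠ 0 then a else b) =
      Fintype.card α ^ l * (Fintype.card α ^ k - 1) * a + (Fintype.card α ^ l - 1) * b := by
  simp only [sum_ite, sum_const, smul_eq_mul, filter_filter, exists_lt_ne_zero_iff_castAdd_ne_zero,
    not_not, card_filter_ne_zero_castAdd_ne_zero, card_filter_ne_zero_castAdd_eq_zero]

end Messages

theorem luep_gv_bound_general (n kA kB dA dB : ℕ)
    (hsize : 2 ^ kB * (2 ^ kA - 1) * V n dA + (2 ^ kB - 1) * V n dB < 2 ^ n) :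
    ∃ G₀ : Matrix (Fin (kA + kB)) (Fin n) (ZMod 2),
      ∀ u : Fin (kA + kB) → ZMod 2, u ≠ 0 →
        ((∃ i : Fin (kA + kB), i.val < kA ∧ u i ≠ 0) →
            dA + 1 ≤ hammingNorm (Matrix.vecMul u G₀)) ∧
        ((¬ ∃ i : Fin (kA + kB), i.val < kA ∧ u i ≠ 0) →
            dB + 1 ≤ hammingNorm (Matrix.vecMul u G₀)) := by
  obtain ⟨G, hG⟩ := Matrix.exists_forall_lt_hammingNorm_vecMul (ι := Fin n)
    (fun u : Fin (kA + kB) → ZMod 2 => if ∃ i : Fin (kA + kB), i.val < kA ∧ u i ≠ 0 then dA else dB)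
    (by simpa [card_hammingNorm_le_zmodTwo, apply_ite (V n),
      sum_ne_zero_ite_exists_lt] using hsize)
  exact ⟨G, fun u hu =>
    ⟨fun hA => by simpa [hA] using hG u hu, fun hA => by simpa [hA] using hG u hu⟩⟩

/-- The two-level UEP GV bound is achieved by linear codes: there is a
generator matrix `G₀` such that every nonzero message whose first `k_A`
coordinates are not all zero is encoded with Hamming weight `> d_A`, and
every other nonzero message is encoded with Hamming weight `> d_B`. -/
theorem luep_gv_bound (n kA kB dA dB : ℕ) (hd : dB < dA)
    (hsize : 2 ^ kB * (2 ^ kA - 1) * V n dA + (2 ^ kB - 1) * V n dB < 2 ^ n) :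
    ∃ G₀ : Matrix (Fin (kA + kB)) (Fin n) (ZMod 2),
      ∀ u : Fin (kA + kB) → ZMod 2, u ≠ 0 →
        ((∃ i : Fin (kA + kB), i.val < kA ∧ u i ≠ 0) →
            dA + 1 ≤ hammingNorm (Matrix.vecMul u G₀)) ∧
        ((¬ ∃ i : Fin (kA + kB), i.val < kA ∧ u i ≠ 0) →
            dB + 1 ≤ hammingNorm (Matrix.vecMul u G₀)) :=
  luep_gv_bound_general n kA kB dA dB hsize
end

section
/- Suppose F_2^n contains M pairwise disjoint Hamming balls of radius r. Then there exist M pairwise disjoint Hamming balls with centers a_1,...,a_M and radius r such that for every i ∈ {2,...,M} there exists j < i with d_H(a_i, a_j) = 2r + 1. -/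
/-!
Grow the chain one index at a time. Suppose the centres with index `< k` already form a chain,
and let `(p, q)` be a closest pair with `p < k ≤ q`. If `d(a p, a q) = δ`, move `q` to position
`k`. Otherwise translate every centre with index `< k` by the vector supported on a coordinate
where `a p` and `a q` differ that makes them agree there: distances inside the prefix and
inside the suffix do not change, distances across change by at most one and were all
`≥ d(a p, a q) > δ`, so the configuration stays a packing while `d(a p, a q)` drops by one.
The translation is repeated until the distance reaches `δ`.
-/

open Finset Function

section Packing

variable {ι : Type*} [Fintype ι] {β : ι → Type*} [∀ i, DecidableEq (β i)] {M : ℕ}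

def IsPacking (δ : ℕ) (a : Fin M → ∀ i, β i) : Prop :=
  Pairwise fun i j => δ ≤ hammingDist (a i) (a j)

def IsChainedUpTo (δ : ℕ) (a : Fin M → ∀ i, β i) (k : ℕ) : Prop :=
  ∀ i : Fin M, 1 ≤ i.val → i.val < k → ∃ j < i, hammingDist (a i) (a j) = δ

theorem IsChainedUpTo.comp_swap_succ {δ k : ℕ} {a : Fin M → ∀ i, β i}
    (hc : IsChainedUpTo δ a k) {p q : Fin M} (hp : p.val < k) (hq : k ≤ q.val)
    (hpq : hammingDist (a q) (a p) = δ) :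
    IsChainedUpTo δ (a ∘ Equiv.swap ⟨k, hq.trans_lt q.isLt⟩ q) (k + 1) := by
  set s := Equiv.swap (⟨k, hq.trans_lt q.isLt⟩ : Fin M) q
  have hs : ∀ i : Fin M, i.val < k → s i = i := fun i hi =>
    Equiv.swap_apply_of_ne_of_ne (Fin.ne_of_val_ne hi.ne) (Fin.ne_of_val_ne (by omega))
  intro i hi1 hik
  rcases Nat.lt_succ_iff_lt_or_eq.mp hik with hik | rfl
  · obtain ⟨j, hji, hd⟩ := hc i hi1 hik
    exact ⟨j, hji, by simp only [comp_apply, hs i hik, hs j (by omega), hd]⟩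
  · refine ⟨p, Fin.lt_def.mpr hp, ?_⟩
    have hsi : s i = q := Equiv.swap_apply_left _ _
    simp only [comp_apply, hsi, hs p hp, hpq]

variable [∀ i, AddCommGroup (β i)]

theorem hammingDist_add_right (x y v : ∀ i, β i) :
    hammingDist (x + v) (y + v) = hammingDist x y := by
  simp only [hammingDist, Pi.add_apply, ne_eq, add_left_inj]

theorem hammingDist_self_add (x v : ∀ i, β i) : hammingDist x (x + v) = hammingNorm v := by
  simp only [hammingDist, hammingNorm, Pi.add_apply, ne_eq, left_eq_add]

theorem hammingDist_le_hammingDist_add_add_hammingNorm (x y v : ∀ i, β i) :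
    hammingDist x y ≤ hammingDist (x + v) y + hammingNorm v :=
  calc hammingDist x y ≤ hammingDist x (x + v) + hammingDist (x + v) y :=
        hammingDist_triangle _ _ _
    _ = hammingDist (x + v) y + hammingNorm v := by rw [hammingDist_self_add, add_comm]

def shiftBelow (k : ℕ) (v : ∀ i, β i) (a : Fin M → ∀ i, β i) (j : Fin M) : ∀ i, β i :=
  if j.val < k then a j + v else a j

theorem hammingDist_shiftBelow_of_iff {k : ℕ} (v : ∀ i, β i) (a : Fin M → ∀ i, β i)
    {i j : Fin M} (h : i.val < k ↔ j.val < k) :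
    hammingDist (shiftBelow k v a i) (shiftBelow k v a j) = hammingDist (a i) (a j) := by
  by_cases hi : i.val < k
  · simp only [shiftBelow, if_pos hi, if_pos (h.mp hi), hammingDist_add_right]
  · simp only [shiftBelow, if_neg hi, if_neg (mt h.mpr hi)]

theorem hammingDist_le_hammingDist_shiftBelow (k : ℕ) (v : ∀ i, β i)
    (a : Fin M → ∀ i, β i) (i j : Fin M) :
    hammingDist (a i) (a j) ≤
      hammingDist (shiftBelow k v a i) (shiftBelow k v a j) + hammingNorm v := by
  by_cases hi : i.val < k <;> by_cases hj : j.val < k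
  · rw [hammingDist_shiftBelow_of_iff v a (iff_of_true hi hj)]; omega
  · simp only [shiftBelow, if_pos hi, if_neg hj]
    exact hammingDist_le_hammingDist_add_add_hammingNorm _ _ _
  · simp only [shiftBelow, if_neg hi, if_pos hj]
    rw [hammingDist_comm (a i), hammingDist_comm (a i)]
    exact hammingDist_le_hammingDist_add_add_hammingNorm _ _ _
  · rw [hammingDist_shiftBelow_of_iff v a (iff_of_false hi hj)]; omega

variable [DecidableEq ι]

theorem hammingNorm_single_le_one (m : ι) (c : β m) : hammingNorm (Pi.single m c) ≤ 1 := by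
  refine card_le_one.mpr fun i hi j hj => ?_
  have hsupp : ∀ l, Pi.single m c l ≠ 0 → l = m := fun l hl => by
    by_contra hlm
    exact hl (Pi.single_eq_of_ne hlm c)
  simp only [mem_filter, mem_univ, true_and] at hi hj
  rw [hsupp i hi, hsupp j hj]

theorem hammingDist_add_single_sub_lt {x y : ∀ i, β i} {m : ι} (hm : x m ≠ y m) :
    hammingDist (x + Pi.single m (y m - x m)) y < hammingDist x y := by
  refine card_lt_card ((ssubset_iff_of_subset fun i => ?_).mpr ⟨m, ?_, ?_⟩)
  · by_cases him : i = m <;> simp [him]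
  · simpa using hm
  · simp

variable {δ k : ℕ}

theorem IsPacking.exists_closer_of_minimal {a : Fin M → ∀ i, β i} (ha : IsPacking δ a)
    (hc : IsChainedUpTo δ a k) {p q : Fin M} (hp : p.val < k) (hq : k ≤ q.val)
    (hδ : δ < hammingDist (a p) (a q))
    (hmin : ∀ i j : Fin M, i.val < k → k ≤ j.val →
      hammingDist (a p) (a q) ≤ hammingDist (a i) (a j)) :
    ∃ b : Fin M → ∀ i, β i, IsPacking δ b ∧ IsChainedUpTo δ b k ∧
      hammingDist (b p) (b q) < hammingDist (a p) (a q) := by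
  obtain ⟨m, hm⟩ := Function.ne_iff.mp (hammingDist_pos.mp ((Nat.zero_le δ).trans_lt hδ))
  set v := Pi.single m (a q m - a p m)
  have hv : hammingNorm v ≤ 1 := hammingNorm_single_le_one _ _
  refine ⟨shiftBelow k v a, fun i j hij => ?_, fun i hi1 hik => ?_, ?_⟩
  · dsimp only
    by_cases hside : i.val < k ↔ j.val < k
    · rw [hammingDist_shiftBelow_of_iff v a hside]; exact ha hij
    · have hcross : hammingDist (a p) (a q) ≤ hammingDist (a i) (a j) := by
        by_cases hi : i.val < k
        · exact hmin i j hi (not_lt.mp fun hj => hside (iff_of_true hi hj))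
        · rw [hammingDist_comm (a i)]
          exact hmin j i (not_not.mp fun hj => hside (iff_of_false hi hj)) (not_lt.mp hi)
      have := hammingDist_le_hammingDist_shiftBelow k v a i j
      omega
  · obtain ⟨j, hji, hd⟩ := hc i hi1 hik
    refine ⟨j, hji, ?_⟩
    rw [hammingDist_shiftBelow_of_iff v a (iff_of_true hik (by omega)), hd]
  · simp only [shiftBelow, if_pos hp, if_neg (not_lt.mpr hq)]
    exact hammingDist_add_single_sub_lt hm

theorem IsPacking.exists_isChainedUpTo_succ {a : Fin M → ∀ i, β i} (ha : IsPacking δ a)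
    (hc : IsChainedUpTo δ a k) {p q : Fin M} (hp : p.val < k) (hq : k ≤ q.val) :
    ∃ b : Fin M → ∀ i, β i, IsPacking δ b ∧ IsChainedUpTo δ b (k + 1) := by
  by_cases hcloser : ∃ i j : Fin M, i.val < k ∧ k ≤ j.val ∧
      hammingDist (a i) (a j) < hammingDist (a p) (a q)
  · obtain ⟨i, j, hi, hj, _⟩ := hcloser
    exact ha.exists_isChainedUpTo_succ hc hi hj
  push Not at hcloser
  rcases (ha (Fin.ne_of_val_ne (by omega) : p ≠ q)).lt_or_eq with hδ | hδ
  · obtain ⟨b, hb, hbc, _⟩ := ha.exists_closer_of_minimal hc hp hq hδ hcloser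
    exact hb.exists_isChainedUpTo_succ hbc hp hq
  · exact ⟨_, ha.comp_of_injective (Equiv.injective _),
      hc.comp_swap_succ hp hq (by rw [hammingDist_comm, hδ])⟩
termination_by hammingDist (a p) (a q)

theorem IsPacking.exists_isChainedUpTo {a : Fin M → ∀ i, β i} (ha : IsPacking δ a) (k : ℕ) :
    ∃ b : Fin M → ∀ i, β i, IsPacking δ b ∧ IsChainedUpTo δ b k := by
  induction k with
  | zero => exact ⟨a, ha, fun i _ hi => absurd hi (Nat.not_lt_zero _)⟩
  | succ k ih =>
    obtain ⟨b, hb, hbc⟩ := ih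
    by_cases hk : 0 < k ∧ k < M
    · exact hb.exists_isChainedUpTo_succ hbc (p := ⟨0, by omega⟩) (q := ⟨k, hk.2⟩) hk.1
        le_rfl
    · refine ⟨b, hb, fun i hi1 hik => hbc i hi1 ?_⟩
      omega

end Packing

/-- A packing of disjoint Hamming balls can be rearranged so that the centers
form a chain-connected configuration at exact distance `2r+1`. -/
theorem packing_rearrangement (n M r : ℕ)
    (h : ∃ a : Fin M → Fin n → ZMod 2,
      ∀ i j, i ≠ j → 2 * r + 1 ≤ hammingDist (a i) (a j)) :
    ∃ a : Fin M → Fin n → ZMod 2,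
      (∀ i j, i ≠ j → 2 * r + 1 ≤ hammingDist (a i) (a j)) ∧
      ∀ i : Fin M, 1 ≤ i.val →
        ∃ j : Fin M, j < i ∧ hammingDist (a i) (a j) = 2 * r + 1 := by
  obtain ⟨a, ha⟩ := h
  obtain ⟨b, hb, hbc⟩ := IsPacking.exists_isChainedUpTo (δ := 2 * r + 1) (a := a)
    (fun i j hij => ha i j hij) M
  exact ⟨b, fun i j hij => hb hij, fun i hi => hbc i hi i.isLt⟩
end

section
/- Let D_1,...,D_M ⊆ F_2^n be connected sets with |D_i| > (B−1)·V(n, d_B−1) for each i and pairwise set distance d_H(D_i, D_j) ≥ d_A for i ≠ j, where d_A ≥ d_B. Then there exists an (M·B)-element code C ⊆ ∪_i D_i, partitioned into M blocks C_i ⊆ D_i each of size B and minimum distance ≥ d_B, such that codewords in different blocks are at Hamming distance ≥ d_A. -/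
lemma ball_card_le (n r : ℕ) (x : Fin n → ZMod 2) :
    (Finset.univ.filter fun y => hammingDist x y ≤ r).card ≤ V n r := by
  have hinj : Set.InjOn (fun y : Fin n → ZMod 2 => Finset.univ.filter fun i => x i ≠ y i)
      ↑(Finset.univ.filter fun y => hammingDist x y ≤ r) := by
    intro y _ y' _ h
    funext i
    by_cases hi : x i ≠ y i
    · have hi' : x i ≠ y' i := by
        have := Finset.ext_iff.1 h i
        simp [hi] at this; simpa using this
      have tri : ∀ a b c : ZMod 2, a ≠ b → a ≠ c → b = c := by decide
      exact tri _ _ _ hi hi'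
    · push_neg at hi
      have hi' : ¬ (x i ≠ y' i) := by
        have := Finset.ext_iff.1 h i
        simp [hi] at this ⊢; tauto
      push_neg at hi'
      rw [← hi, ← hi']
  calc (Finset.univ.filter fun y => hammingDist x y ≤ r).card
      ≤ ((Finset.univ.filter fun y => hammingDist x y ≤ r).image
          fun y => Finset.univ.filter fun i => x i ≠ y i).card := by
        rw [Finset.card_image_of_injOn hinj]
    _ ≤ ((Finset.range (r+1)).biUnion fun k => Finset.powersetCard k (Finset.univ : Finset (Fin n))).card := by
        apply Finset.card_le_card
        intro s hs
        simp only [Finset.mem_image, Finset.mem_filter] at hs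
        obtain ⟨y, ⟨_, hy⟩, rfl⟩ := hs
        simp only [Finset.mem_biUnion, Finset.mem_range, Finset.mem_powersetCard]
        refine ⟨(Finset.univ.filter fun i => x i ≠ y i).card, ?_, Finset.subset_univ _, rfl⟩
        have : hammingDist x y = (Finset.univ.filter fun i => x i ≠ y i).card := by
          simp [hammingDist]
        omega
    _ ≤ (Finset.range (r+1)).sum fun k => (Finset.powersetCard k (Finset.univ : Finset (Fin n))).card :=
        Finset.card_biUnion_le
    _ = V n r := by
        simp [V, Finset.card_powersetCard]

lemma select (n B dB : ℕ) (hdB : 1 ≤ dB)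
    (D : Finset (Fin n → ZMod 2)) (hcard : (B - 1) * V n (dB - 1) < D.card) :
    ∃ s : Finset (Fin n → ZMod 2), s ⊆ D ∧ s.card = B ∧
      ∀ x ∈ s, ∀ y ∈ s, x ≠ y → dB ≤ hammingDist x y := by
  have key : ∀ k ≤ B, ∃ s : Finset (Fin n → ZMod 2), s ⊆ D ∧ s.card = k ∧
      ∀ x ∈ s, ∀ y ∈ s, x ≠ y → dB ≤ hammingDist x y := by
    intro k hk
    induction k with
    | zero => exact ⟨∅, by simp⟩
    | succ m ih =>
      obtain ⟨s, hsD, hscard, hsdist⟩ := ih (by omega)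
      set U := s.biUnion fun x => Finset.univ.filter fun y => hammingDist x y ≤ dB - 1 with hU
      have hUcard : U.card ≤ m * V n (dB - 1) := by
        calc U.card ≤ s.sum fun x => (Finset.univ.filter fun y => hammingDist x y ≤ dB - 1).card :=
              Finset.card_biUnion_le
          _ ≤ s.sum fun _ => V n (dB - 1) := Finset.sum_le_sum fun x _ => ball_card_le n _ x
          _ = m * V n (dB - 1) := by rw [Finset.sum_const, hscard, smul_eq_mul]
      have hne : ∃ z ∈ D, z ∉ U := by
        by_contra h
        push_neg at h
        have : D.card ≤ U.card := Finset.card_le_card h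
        have hm : m * V n (dB - 1) ≤ (B - 1) * V n (dB - 1) :=
          Nat.mul_le_mul_right _ (by omega)
        omega
      obtain ⟨z, hzD, hzU⟩ := hne
      have hzfar : ∀ x ∈ s, dB ≤ hammingDist x z := by
        intro x hx
        by_contra h
        exact hzU (Finset.mem_biUnion.2 ⟨x, hx, by simp; omega⟩)
      have hzs : z ∉ s := by
        intro h
        have := hzfar z h
        simp [hammingDist_self] at this
        omega
      refine ⟨insert z s, ?_, ?_, ?_⟩
      · exact Finset.insert_subset hzD hsD
      · rw [Finset.card_insert_of_notMem hzs, hscard]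
      · intro x hx y hy hxy
        rcases Finset.mem_insert.1 hx with hxz | hx' <;>
          rcases Finset.mem_insert.1 hy with hyz | hy'
        · exact absurd (hxz.trans hyz.symm) hxy
        · subst hxz; rw [hammingDist_comm]; exact hzfar y hy'
        · subst hyz; exact hzfar x hx'
        · exact hsdist x hx' y hy' hxy
  exact key B le_rfl

/-- From `M` large connected sets at pairwise distance `≥ d_A`, one can build
an `M·B`-codeword code consisting of `M` blocks of `B` codewords each, with
intra-block distance `≥ d_B` and inter-block distance `≥ d_A`. -/
theorem blocks_from_connected_sets (n M B dA dB : ℕ)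
    (hB : 1 ≤ B) (hdB : 1 ≤ dB) (hd : dB ≤ dA)
    (D : Fin M → Finset (Fin n → ZMod 2))
    (hconn : ∀ i, IsConnectedSet (D i))
    (hcard : ∀ i, (B - 1) * V n (dB - 1) < (D i).card)
    (hdist : ∀ i j, i ≠ j → ∀ x ∈ D i, ∀ y ∈ D j, dA ≤ hammingDist x y) :
    ∃ c : Fin M → Fin B → Fin n → ZMod 2,
      (∀ i j, c i j ∈ D i) ∧
      (∀ i, Function.Injective (c i)) ∧
      (∀ i j j', j ≠ j' → dB ≤ hammingDist (c i j) (c i j')) ∧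
      ∀ i i' j j', i ≠ i' → dA ≤ hammingDist (c i j) (c i' j') := by
  choose s hsub hscard hsdist using fun i => select n B dB hdB (D i) (hcard i)
  refine ⟨fun i j => ((s i).equivFin.symm (Fin.cast (hscard i).symm j)).1, ?_, ?_, ?_, ?_⟩
  · intro i j
    exact hsub i ((s i).equivFin.symm (Fin.cast (hscard i).symm j)).2
  · intro i j j' h
    have := (s i).equivFin.symm.injective (Subtype.val_injective h)
    exact Fin.cast_injective _ this
  · intro i j j' hjj'
    refine hsdist i _ ((s i).equivFin.symm (Fin.cast (hscard i).symm j)).2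
      _ ((s i).equivFin.symm (Fin.cast (hscard i).symm j')).2 ?_
    intro h
    exact hjj' (Fin.cast_injective _ ((s i).equivFin.symm.injective (Subtype.val_injective h)))
  · intro i i' j j' hii'
    exact hdist i i' hii' _ (hsub i ((s i).equivFin.symm (Fin.cast (hscard i).symm j)).2)
      _ (hsub i' ((s i').equivFin.symm (Fin.cast (hscard i').symm j')).2)
end
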